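/- Let n₁, n₂ be positive integers and let f be a smooth holomorphic function on 𝒰 = ℝ₊² × ℋ_{n₁} × ℋ_{n₂} with ‖f‖_{H¹(𝒰)} < ∞. Then there exists a tempered distribution f^b on ℋ_{n₁} × ℋ_{n₂} ≅ ℝ^{2n₁+2n₂+2} (a continuous linear functional on the Schwartz space) such that for every Schwartz function ψ on ℝ^{2n₁+2n₂+2}, ∫_{ℋ_{n₁}×ℋ_{n₂}} f(ε₁,ε₂,g) ψ(g) dg → f^b(ψ) as (ε₁,ε₂) → (0,0) with ε₁, ε₂ > 0. -/

import Mathlib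

open MeasureTheory

noncomputable section

/-- A point of the Heisenberg group ℋ_n : `(s, z) ∈ ℝ × ℂⁿ`. -/
abbrev Heis (n : ℕ) := ℝ × (Fin n → ℂ)

/-- The flat-model ambient space `(t₁, t₂, g₁, g₂)`. -/
abbrev FlatPt (n₁ n₂ : ℕ) := ℝ × ℝ × Heis n₁ × Heis n₂

/-- The holomorphy equations on the flat model. -/
def IsFlatHolomorphicAt (n₁ n₂ : ℕ) (f : FlatPt n₁ n₂ → ℂ) (p : FlatPt n₁ n₂) : Prop :=
  (1/2 : ℂ) * (fderiv ℝ f p (0, 0, (1, 0), 0) + Complex.I * fderiv ℝ f p (1, 0, 0, 0)) = 0 ∧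
  (1/2 : ℂ) * (fderiv ℝ f p (0, 0, 0, (1, 0)) + Complex.I * fderiv ℝ f p (0, 1, 0, 0)) = 0 ∧
  (∀ j : Fin n₁,
    (1/2 : ℂ) * (fderiv ℝ f p (0, 0, (0, Pi.single j 1), 0)
        + Complex.I * fderiv ℝ f p (0, 0, (0, Pi.single j Complex.I), 0))
      - Complex.I * p.2.2.1.2 j * fderiv ℝ f p (0, 0, (1, 0), 0) = 0) ∧
  (∀ j : Fin n₂,
    (1/2 : ℂ) * (fderiv ℝ f p (0, 0, 0, (0, Pi.single j 1))
        + Complex.I * fderiv ℝ f p (0, 0, 0, (0, Pi.single j Complex.I)))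
      - Complex.I * p.2.2.2.2 j * fderiv ℝ f p (0, 0, 0, (1, 0)) = 0)

namespace BoundaryDist

open Complex Metric Set Filter

variable {n₁ n₂ : ℕ}

instance haarHeis (n : ℕ) : (volume : Measure (Heis n)).IsAddHaarMeasure :=
  Measure.prod.instIsAddHaarMeasure _ _

instance haarG (n₁ n₂ : ℕ) : (volume : Measure (Heis n₁ × Heis n₂)).IsAddHaarMeasure :=
  Measure.prod.instIsAddHaarMeasure _ _

abbrev G (n₁ n₂ : ℕ) := Heis n₁ × Heis n₂

/-- helper: integrability of an `L¹`-bounded continuous slice. -/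
lemma integrable_of_lintegral_le {h : G n₁ n₂ → ℂ} {M : ℝ}
    (hc : AEStronglyMeasurable h (volume : Measure (G n₁ n₂)))
    (hL : ∫⁻ g, ‖h g‖₊ ≤ ENNReal.ofReal M) : Integrable h := by
  refine ⟨hc, ?_⟩
  exact lt_of_le_of_lt hL ENNReal.ofReal_lt_top

lemma integrable_mul_bdd {h φ : G n₁ n₂ → ℂ} {C : ℝ}
    (hint : Integrable h) (hφm : AEStronglyMeasurable φ (volume : Measure (G n₁ n₂)))
    (hb : ∀ g, ‖φ g‖ ≤ C) : Integrable (fun g => h g * φ g) := by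
  simpa [mul_comm] using hint.bdd_mul hφm (Filter.Eventually.of_forall hb)

lemma lintegral_translate (h : G n₁ n₂ → ℂ) (a : G n₁ n₂) :
    ∫⁻ g, (‖h (g + a)‖₊ : ENNReal) = ∫⁻ g, (‖h g‖₊ : ENNReal) :=
  lintegral_add_right_eq_self (fun g => (‖h g‖₊ : ENNReal)) a

lemma integrable_translate {h : G n₁ n₂ → ℂ} (hint : Integrable h) (a : G n₁ n₂) :
    Integrable (fun g => h (g + a)) :=
  ((measurePreserving_add_right (volume : Measure (G n₁ n₂)) a).integrable_comp
    hint.aestronglyMeasurable).2 hint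

lemma integral_norm_mul_le {h φ : G n₁ n₂ → ℂ} {M C : ℝ} (hM : 0 ≤ M) (hC : 0 ≤ C)
    (hint : Integrable h) (hL : ∫⁻ g, ‖h g‖₊ ≤ ENNReal.ofReal M)
    (hφm : AEStronglyMeasurable φ (volume : Measure (G n₁ n₂))) (hb : ∀ g, ‖φ g‖ ≤ C) :
    ∫ g, ‖h g * φ g‖ ≤ M * C := by
  have h1 : ∫ g, ‖h g * φ g‖ ≤ ∫ g, ‖h g‖ * C := by
    refine integral_mono_of_nonneg (Filter.Eventually.of_forall fun g => norm_nonneg _)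
      (hint.norm.mul_const C) (Filter.Eventually.of_forall fun g => ?_)
    show ‖h g * φ g‖ ≤ ‖h g‖ * C
    rw [norm_mul]
    exact mul_le_mul_of_nonneg_left (hb g) (norm_nonneg _)
  have h2 : ∫ g, ‖h g‖ * C = (∫ g, ‖h g‖) * C := by
    rw [integral_mul_const]
  have h3 : ∫ g, ‖h g‖ ≤ M := by
    rw [integral_norm_eq_lintegral_enorm hint.aestronglyMeasurable]
    exact ENNReal.toReal_le_of_le_ofReal hM hL
  calc ∫ g, ‖h g * φ g‖ ≤ (∫ g, ‖h g‖) * C := h1.trans_eq h2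
    _ ≤ M * C := mul_le_mul_of_nonneg_right h3 hC

lemma norm_integral_mul_le {h φ : G n₁ n₂ → ℂ} {M C : ℝ} (hM : 0 ≤ M) (hC : 0 ≤ C)
    (hint : Integrable h) (hL : ∫⁻ g, ‖h g‖₊ ≤ ENNReal.ofReal M)
    (hφm : AEStronglyMeasurable φ (volume : Measure (G n₁ n₂))) (hb : ∀ g, ‖φ g‖ ≤ C) :
    ‖∫ g, h g * φ g‖ ≤ M * C :=
  (norm_integral_le_integral_norm _).trans
    (integral_norm_mul_le hM hC hint hL hφm hb)

lemma integral_translate_mul (h φ : G n₁ n₂ → ℂ) (a : G n₁ n₂) :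
    ∫ g, h (g + a) * φ g = ∫ g, h g * φ (g - a) := by
  have := integral_add_right_eq_self (μ := (volume : Measure (G n₁ n₂)))
    (fun x => h x * φ (x - a)) a
  simpa [add_sub_cancel_right] using this


def e₁ : G n₁ n₂ := (((1:ℝ), 0), 0)
def e₂ : G n₁ n₂ := (0, ((1:ℝ), 0))

lemma isOpen_Q : IsOpen {q : FlatPt n₁ n₂ | 0 < q.1 ∧ 0 < q.2.1} :=
  (isOpen_lt continuous_const continuous_fst).inter
    (isOpen_lt continuous_const (continuous_fst.comp continuous_snd))

lemma slice_holo₁ {f : FlatPt n₁ n₂ → ℂ}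
    (hf : ContDiffOn ℝ (⊤ : ℕ∞) f {q : FlatPt n₁ n₂ | 0 < q.1 ∧ 0 < q.2.1})
    (hholo : ∀ q : FlatPt n₁ n₂, 0 < q.1 → 0 < q.2.1 → IsFlatHolomorphicAt n₁ n₂ f q)
    {t₂ : ℝ} (ht₂ : 0 < t₂) (g : G n₁ n₂) {w : ℂ} (hw : 0 < w.im) :
    DifferentiableAt ℂ (fun v : ℂ => f (v.im, t₂, g + v.re • e₁)) w := by
  set L : ℂ →L[ℝ] FlatPt n₁ n₂ :=
    Complex.imCLM.prod ((0 : ℂ →L[ℝ] ℝ).prod (Complex.reCLM.smulRight e₁)) with hL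
  set A : ℂ → FlatPt n₁ n₂ := fun v => (((0:ℝ), t₂, g) : FlatPt n₁ n₂) + L v with hA
  have hfeq : (fun v : ℂ => f (v.im, t₂, g + v.re • e₁)) = f ∘ A := by
    funext v
    simp [A, hL, Prod.mk_add_mk, Function.comp]
  have hAd : HasFDerivAt A L w := (L.hasFDerivAt).const_add _
  set p : FlatPt n₁ n₂ := A w with hp
  have hpQ : p ∈ {q : FlatPt n₁ n₂ | 0 < q.1 ∧ 0 < q.2.1} := by
    constructor
    · show (0:ℝ) < p.1
      simp [hp, A, hL, hw]
    · show (0:ℝ) < p.2.1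
      simp [hp, A, hL, ht₂]
  have hfd : DifferentiableAt ℝ f p :=
    (hf.differentiableOn (by simp)).differentiableAt (isOpen_Q.mem_nhds hpQ)
  have hcomp : HasFDerivAt (f ∘ A) ((fderiv ℝ f p).comp L) w :=
    HasFDerivAt.comp w hfd.hasFDerivAt hAd
  set d : ℂ := fderiv ℝ f p (0, 0, (1, 0), 0) with hd
  set dt : ℂ := fderiv ℝ f p (1, 0, 0, 0) with hdt
  have h0 : d + Complex.I * dt = 0 := by
    have h := (hholo p hpQ.1 hpQ.2).1
    rw [mul_eq_zero] at h
    rcases h with h | h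
    · norm_num at h
    · exact h
  have hCR : dt = Complex.I * d := by
    linear_combination (-Complex.I) * h0 + dt * Complex.I_sq
  set C : ℂ →L[ℂ] ℂ := (1 : ℂ →L[ℂ] ℂ).smulRight d with hC
  have hrs : C.restrictScalars ℝ = (fderiv ℝ f p).comp L := by
    apply ContinuousLinearMap.ext
    intro v
    have hv : L v = v.im • (((1:ℝ), (0:ℝ), (0 : G n₁ n₂)) : FlatPt n₁ n₂)
        + v.re • (((0:ℝ), (0:ℝ), e₁) : FlatPt n₁ n₂) := by
      simp [hL, Prod.ext_iff]
    show v • d = (fderiv ℝ f p) (L v)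
    rw [hv, map_add, (fderiv ℝ f p).map_smul, (fderiv ℝ f p).map_smul]
    show v • d = v.im • dt + v.re • d
    rw [hCR]
    simp only [Complex.real_smul, smul_eq_mul]
    linear_combination (-d) * (Complex.re_add_im v)
  have := (hasFDerivAt_of_restrictScalars ℝ hcomp hrs).differentiableAt
  rw [hfeq]
  exact this

lemma slice_holo₂ {f : FlatPt n₁ n₂ → ℂ}
    (hf : ContDiffOn ℝ (⊤ : ℕ∞) f {q : FlatPt n₁ n₂ | 0 < q.1 ∧ 0 < q.2.1})
    (hholo : ∀ q : FlatPt n₁ n₂, 0 < q.1 → 0 < q.2.1 → IsFlatHolomorphicAt n₁ n₂ f q)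
    {t₁ : ℝ} (ht₁ : 0 < t₁) (g : G n₁ n₂) {w : ℂ} (hw : 0 < w.im) :
    DifferentiableAt ℂ (fun v : ℂ => f (t₁, v.im, g + v.re • e₂)) w := by
  set L : ℂ →L[ℝ] FlatPt n₁ n₂ :=
    (0 : ℂ →L[ℝ] ℝ).prod (Complex.imCLM.prod (Complex.reCLM.smulRight e₂)) with hL
  set A : ℂ → FlatPt n₁ n₂ := fun v => ((t₁, (0:ℝ), g) : FlatPt n₁ n₂) + L v with hA
  have hfeq : (fun v : ℂ => f (t₁, v.im, g + v.re • e₂)) = f ∘ A := by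
    funext v
    simp [A, hL, Prod.mk_add_mk, Function.comp]
  have hAd : HasFDerivAt A L w := (L.hasFDerivAt).const_add _
  set p : FlatPt n₁ n₂ := A w with hp
  have hpQ : p ∈ {q : FlatPt n₁ n₂ | 0 < q.1 ∧ 0 < q.2.1} := by
    constructor
    · show (0:ℝ) < p.1
      simp [hp, A, hL, ht₁]
    · show (0:ℝ) < p.2.1
      simp [hp, A, hL, hw]
  have hfd : DifferentiableAt ℝ f p :=
    (hf.differentiableOn (by simp)).differentiableAt (isOpen_Q.mem_nhds hpQ)
  have hcomp : HasFDerivAt (f ∘ A) ((fderiv ℝ f p).comp L) w :=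
    HasFDerivAt.comp w hfd.hasFDerivAt hAd
  set d : ℂ := fderiv ℝ f p (0, 0, 0, (1, 0)) with hd
  set dt : ℂ := fderiv ℝ f p (0, 1, 0, 0) with hdt
  have h0 : d + Complex.I * dt = 0 := by
    have h := (hholo p hpQ.1 hpQ.2).2.1
    rw [mul_eq_zero] at h
    rcases h with h | h
    · norm_num at h
    · exact h
  have hCR : dt = Complex.I * d := by
    linear_combination (-Complex.I) * h0 + dt * Complex.I_sq
  set C : ℂ →L[ℂ] ℂ := (1 : ℂ →L[ℂ] ℂ).smulRight d with hC
  have hrs : C.restrictScalars ℝ = (fderiv ℝ f p).comp L := by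
    apply ContinuousLinearMap.ext
    intro v
    have hv : L v = v.im • (((0:ℝ), (1:ℝ), (0 : G n₁ n₂)) : FlatPt n₁ n₂)
        + v.re • (((0:ℝ), (0:ℝ), e₂) : FlatPt n₁ n₂) := by
      simp [hL, Prod.ext_iff]
    show v • d = (fderiv ℝ f p) (L v)
    rw [hv, map_add, (fderiv ℝ f p).map_smul, (fderiv ℝ f p).map_smul]
    show v • d = v.im • dt + v.re • d
    rw [hCR]
    simp only [Complex.real_smul, smul_eq_mul]
    linear_combination (-d) * (Complex.re_add_im v)
  have := (hasFDerivAt_of_restrictScalars ℝ hcomp hrs).differentiableAt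
  rw [hfeq]
  exact this


lemma diff_q {M Cψ : ℝ} (hM : 0 ≤ M) (h : ℝ → G n₁ n₂ → ℂ) (e : G n₁ n₂)
    (hcont : ContinuousOn (fun p : ℝ × G n₁ n₂ => h p.1 p.2) {p : ℝ × G n₁ n₂ | 0 < p.1})
    (hhol : ∀ g : G n₁ n₂, ∀ w : ℂ, 0 < w.im →
      DifferentiableAt ℂ (fun v : ℂ => h v.im (g + v.re • e)) w)
    (hL1 : ∀ τ : ℝ, 0 < τ → ∫⁻ g, ‖h τ g‖₊ ≤ ENNReal.ofReal M)
    {ψ : G n₁ n₂ → ℂ} (hψc : Continuous ψ) (hψb : ∀ g, ‖ψ g‖ ≤ Cψ)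
    {w₀ : ℂ} (hw₀ : 0 < w₀.im) :
    DifferentiableAt ℂ (fun w : ℂ => ∫ g, h w.im (g + w.re • e) * ψ g) w₀ := by
  have hCψ : 0 ≤ Cψ := le_trans (norm_nonneg _) (hψb 0)
  set q : ℂ → ℂ := fun w : ℂ => ∫ g, h w.im (g + w.re • e) * ψ g with hqdef
  set ρ : ℝ := w₀.im / 2 with hρdef
  have hρ : 0 < ρ := half_pos hw₀
  have hmem_im : ∀ z ∈ closedBall w₀ ρ, ρ ≤ z.im := by
    intro z hz
    have h1 : |(z - w₀).im| ≤ ‖z - w₀‖ := Complex.abs_im_le_norm _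
    have h2 : ‖z - w₀‖ ≤ ρ := by rwa [mem_closedBall, Complex.dist_eq] at hz
    have h3 := (abs_le.1 (h1.trans h2)).1
    rw [Complex.sub_im] at h3
    rw [hρdef] at h3 ⊢
    linarith
  have him_pos : ∀ z ∈ closedBall w₀ ρ, 0 < z.im := fun z hz =>
    lt_of_lt_of_le hρ (hmem_im z hz)
  have hslice_cont : ∀ τ : ℝ, 0 < τ → Continuous (fun g => h τ g) := by
    intro τ hτ
    exact hcont.comp_continuous (continuous_const.prodMk continuous_id) (fun g => hτ)
  have hslice_int : ∀ τ : ℝ, 0 < τ → Integrable (fun g => h τ g) := fun τ hτ =>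
    integrable_of_lintegral_le ((hslice_cont τ hτ).aestronglyMeasurable) (hL1 τ hτ)
  set P : G n₁ n₂ → ℂ → ℂ := fun g z => h z.im (g + z.re • e) * ψ g with hPdef
  have key : ∀ w' ∈ ball w₀ ρ, ∀ g,
      ((2 * Real.pi * Complex.I : ℂ)⁻¹ • ∮ z in C(w₀, ρ), (z - w')⁻¹ • P g z) = P g w' := by
    intro w' hw' g
    apply Complex.two_pi_I_inv_smul_circleIntegral_sub_inv_smul_of_differentiable_on_off_countable
      (s := ∅) Set.countable_empty hw'
    · intro z hz
      exact ((hhol g z (him_pos z hz)).mul_const (ψ g)).continuousAt.continuousWithinAt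
    · intro z hz
      exact (hhol g z (him_pos z (ball_subset_closedBall hz.1))).mul_const (ψ g)
  have him_pos' : ∀ θ : ℝ, 0 < (circleMap w₀ ρ θ).im := fun θ =>
    him_pos _ (sphere_subset_closedBall (circleMap_mem_sphere w₀ hρ.le θ))
  have hFc : Continuous (fun p : ℝ × G n₁ n₂ => P p.2 (circleMap w₀ ρ p.1)) := by
    have hbase : Continuous (fun p : ℝ × G n₁ n₂ =>
        (((circleMap w₀ ρ p.1).im, p.2 + (circleMap w₀ ρ p.1).re • e) : ℝ × G n₁ n₂)) := by
      refine Continuous.prodMk ?_ ?_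
      · exact Complex.continuous_im.comp ((continuous_circleMap w₀ ρ).comp continuous_fst)
      · exact continuous_snd.add
          (((Complex.continuous_re.comp ((continuous_circleMap w₀ ρ).comp
            continuous_fst))).smul continuous_const)
    have hmaps : ∀ p : ℝ × G n₁ n₂,
        (((circleMap w₀ ρ p.1).im, p.2 + (circleMap w₀ ρ p.1).re • e) : ℝ × G n₁ n₂)
          ∈ {p : ℝ × G n₁ n₂ | 0 < p.1} := fun p => him_pos' p.1
    exact (hcont.comp_continuous hbase hmaps).mul (hψc.comp continuous_snd)
  have hqm : StronglyMeasurable (fun θ : ℝ => q (circleMap w₀ ρ θ)) :=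
    hFc.stronglyMeasurable.integral_prod_right'
  have hqb : ∀ z : ℂ, 0 < z.im → ‖q z‖ ≤ M * Cψ := by
    intro z hz
    have hzq : q z = ∫ g, h z.im g * ψ (g - z.re • e) := integral_translate_mul _ _ _
    rw [hzq]
    exact norm_integral_mul_le hM hCψ (hslice_int z.im hz) (hL1 z.im hz)
      ((hψc.comp (continuous_id.sub continuous_const)).aestronglyMeasurable) (fun g => hψb _)
  have hqci : CircleIntegrable q w₀ ρ := by
    rw [CircleIntegrable, intervalIntegrable_iff]
    refine Integrable.mono' (g := fun _ => M * Cψ)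
      (integrableOn_const ?_) hqm.aestronglyMeasurable.restrict
      (Filter.Eventually.of_forall fun θ => hqb _ (him_pos' θ))
    rw [Set.uIoc_of_le Real.two_pi_pos.le]
    exact measure_Ioc_lt_top.ne
  -- Cauchy representation of q on the ball
  have qkey : ∀ w' ∈ ball w₀ ρ,
      q w' = (2 * Real.pi * Complex.I : ℂ)⁻¹ • ∮ z in C(w₀, ρ), (z - w')⁻¹ • q z := by
    intro w' hw'
    set δ : ℝ := ρ - dist w' w₀ with hδdef
    have hδ : 0 < δ := sub_pos.2 (mem_ball.1 hw')
    have hdistθ : ∀ θ : ℝ, dist (circleMap w₀ ρ θ) w₀ = ρ := by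
      intro θ
      have := circleMap_mem_sphere w₀ hρ.le θ
      rwa [mem_sphere] at this
    have hden : ∀ θ : ℝ, δ ≤ dist (circleMap w₀ ρ θ) w' := by
      intro θ
      have htr := dist_triangle (circleMap w₀ ρ θ) w' w₀
      rw [hdistθ θ] at htr
      rw [hδdef]
      have : dist w' w₀ = dist w' w₀ := rfl
      linarith [htr]
    have hne : ∀ θ : ℝ, circleMap w₀ ρ θ - w' ≠ 0 := by
      intro θ
      rw [sub_ne_zero]
      intro hcontra
      have := hden θ
      rw [hcontra] at this
      simp at this
      linarith
    have hinvb : ∀ θ : ℝ, ‖(circleMap w₀ ρ θ - w')⁻¹‖ ≤ δ⁻¹ := by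
      intro θ
      rw [norm_inv]
      refine inv_anti₀ hδ ?_
      have := hden θ
      rwa [Complex.dist_eq] at this
    set κ : ℝ → G n₁ n₂ → ℂ := fun θ g =>
      deriv (circleMap w₀ ρ) θ • ((circleMap w₀ ρ θ - w')⁻¹ • P g (circleMap w₀ ρ θ)) with hκdef
    have hκc : Continuous (fun p : ℝ × G n₁ n₂ => κ p.1 p.2) := by
      have hc1 : Continuous (fun θ : ℝ => deriv (circleMap w₀ ρ) θ) := by
        simp only [deriv_circleMap]
        exact (continuous_circleMap 0 ρ).mul continuous_const
      have hc2 : Continuous (fun θ : ℝ => (circleMap w₀ ρ θ - w')⁻¹) :=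
        ((continuous_circleMap w₀ ρ).sub continuous_const).inv₀ hne
      exact ((hc1.comp continuous_fst).smul ((hc2.comp continuous_fst).smul hFc))
    have hXint : ∀ θ : ℝ, Integrable (fun g => P g (circleMap w₀ ρ θ)) := by
      intro θ
      refine integrable_mul_bdd ?_ hψc.aestronglyMeasurable hψb
      exact integrable_translate (hslice_int _ (him_pos' θ)) _
    have hXbound : ∀ θ : ℝ, ∫ g, ‖P g (circleMap w₀ ρ θ)‖ ≤ M * Cψ := by
      intro θ
      refine integral_norm_mul_le hM hCψ (integrable_translate (hslice_int _ (him_pos' θ)) _)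
        ?_ hψc.aestronglyMeasurable hψb
      rw [lintegral_translate]
      exact hL1 _ (him_pos' θ)
    have hderivnorm : ∀ θ : ℝ, ‖deriv (circleMap w₀ ρ) θ‖ = ρ := by
      intro θ
      rw [deriv_circleMap]
      rw [norm_mul, Complex.norm_I,
        norm_circleMap_zero, mul_one, abs_of_pos hρ]
    have hκint : Integrable (Function.uncurry κ)
        ((volume.restrict (Set.Ioc (0:ℝ) (2*Real.pi))).prod volume) := by
      refine (integrable_prod_iff hκc.aestronglyMeasurable).2 ⟨?_, ?_⟩
      · refine Filter.Eventually.of_forall (fun θ => ?_)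
        have := (((hXint θ).smul ((circleMap w₀ ρ θ - w')⁻¹)).smul (deriv (circleMap w₀ ρ) θ))
        exact this
      · have hm2 : StronglyMeasurable (fun θ : ℝ => ∫ g, ‖κ θ g‖) :=
          hκc.norm.stronglyMeasurable.integral_prod_right'
        refine Integrable.mono' (g := fun _ => ρ * δ⁻¹ * (M * Cψ))
          (integrableOn_const measure_Ioc_lt_top.ne) hm2.aestronglyMeasurable.restrict
          (Filter.Eventually.of_forall fun θ => ?_)
        have hbnd : ∫ g, ‖κ θ g‖ ≤ ρ * δ⁻¹ * ∫ g, ‖P g (circleMap w₀ ρ θ)‖ := by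
          rw [← integral_const_mul]
          refine integral_mono_of_nonneg (Filter.Eventually.of_forall fun g => norm_nonneg _)
            (((hXint θ).norm).const_mul _) (Filter.Eventually.of_forall fun g => ?_)
          show ‖κ θ g‖ ≤ ρ * δ⁻¹ * ‖P g (circleMap w₀ ρ θ)‖
          rw [hκdef]
          simp only [norm_smul, hderivnorm θ]
          rw [mul_assoc]
          refine mul_le_mul_of_nonneg_left ?_ hρ.le
          exact mul_le_mul_of_nonneg_right (hinvb θ) (norm_nonneg _)
        have : ‖∫ g, ‖κ θ g‖‖ = ∫ g, ‖κ θ g‖ := by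
          rw [Real.norm_eq_abs, _root_.abs_of_nonneg (integral_nonneg fun g => norm_nonneg _)]
        rw [this]
        calc ∫ g, ‖κ θ g‖ ≤ ρ * δ⁻¹ * ∫ g, ‖P g (circleMap w₀ ρ θ)‖ := hbnd
          _ ≤ ρ * δ⁻¹ * (M * Cψ) := by
              refine mul_le_mul_of_nonneg_left (hXbound θ) ?_
              positivity
    have hperθ : ∀ θ : ℝ, deriv (circleMap w₀ ρ) θ •
        ((circleMap w₀ ρ θ - w')⁻¹ • q (circleMap w₀ ρ θ)) = ∫ g, κ θ g := by
      intro θ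
      show deriv (circleMap w₀ ρ) θ •
        ((circleMap w₀ ρ θ - w')⁻¹ • ∫ g, P g (circleMap w₀ ρ θ)) = ∫ g, κ θ g
      rw [← integral_smul, ← integral_smul]
    have hswap : ∫ (θ : ℝ) in Set.Ioc (0:ℝ) (2*Real.pi), ∫ g, κ θ g
        = ∫ g, ∫ (θ : ℝ) in Set.Ioc (0:ℝ) (2*Real.pi), κ θ g :=
      integral_integral_swap hκint
    have hcircP : ∀ g, (∮ z in C(w₀, ρ), (z - w')⁻¹ • P g z)
        = ∫ (θ : ℝ) in Set.Ioc (0:ℝ) (2*Real.pi), κ θ g := by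
      intro g
      rw [circleIntegral, intervalIntegral.integral_of_le Real.two_pi_pos.le]
    have hcircq : (∮ z in C(w₀, ρ), (z - w')⁻¹ • q z)
        = ∫ (θ : ℝ) in Set.Ioc (0:ℝ) (2*Real.pi), ∫ g, κ θ g := by
      rw [circleIntegral, intervalIntegral.integral_of_le Real.two_pi_pos.le]
      refine setIntegral_congr_fun measurableSet_Ioc (fun θ _ => hperθ θ)
    calc q w' = ∫ g, P g w' := rfl
      _ = ∫ g, (2 * Real.pi * Complex.I : ℂ)⁻¹ • ∮ z in C(w₀, ρ), (z - w')⁻¹ • P g z :=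
          integral_congr_ae (Filter.Eventually.of_forall fun g => (key w' hw' g).symm)
      _ = (2 * Real.pi * Complex.I : ℂ)⁻¹ • ∫ g, ∮ z in C(w₀, ρ), (z - w')⁻¹ • P g z :=
          integral_smul _ _
      _ = (2 * Real.pi * Complex.I : ℂ)⁻¹ •
            ∫ g, ∫ (θ : ℝ) in Set.Ioc (0:ℝ) (2*Real.pi), κ θ g :=
          congrArg (fun t => (2 * Real.pi * Complex.I : ℂ)⁻¹ • t)
            (integral_congr_ae (Filter.Eventually.of_forall fun g => hcircP g))
      _ = (2 * Real.pi * Complex.I : ℂ)⁻¹ •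
            ∫ (θ : ℝ) in Set.Ioc (0:ℝ) (2*Real.pi), ∫ g, κ θ g := by rw [← hswap]
      _ = (2 * Real.pi * Complex.I : ℂ)⁻¹ • ∮ z in C(w₀, ρ), (z - w')⁻¹ • q z := by
          rw [hcircq]
  -- now conclude analyticity
  set R : NNReal := ⟨ρ, hρ.le⟩ with hRdef
  have hqciR : CircleIntegrable q w₀ (R : ℝ) := hqci
  have hps := hasFPowerSeriesOn_cauchy_integral (f := q) (c := w₀) hqciR hρ
  have hCT := hps.differentiableOn.differentiableAt
    (EMetric.isOpen_ball.mem_nhds (EMetric.mem_ball_self (by exact_mod_cast hρ)))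
  have heq : q =ᶠ[nhds w₀]
      fun w => (2 * Real.pi * Complex.I : ℂ)⁻¹ • ∮ z in C(w₀, (R:ℝ)), (z - w)⁻¹ • q z :=
    Filter.eventuallyEq_of_mem (ball_mem_nhds w₀ hρ) (fun w hw => qkey w hw)
  exact hCT.congr_of_eventuallyEq heq


lemma core_lipschitz {M Cψ CD : ℝ} (hM : 0 ≤ M) (hCD : 0 ≤ CD)
    (h : ℝ → G n₁ n₂ → ℂ) (e : G n₁ n₂)
    (hcont : ContinuousOn (fun p : ℝ × G n₁ n₂ => h p.1 p.2) {p : ℝ × G n₁ n₂ | 0 < p.1})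
    (hhol : ∀ g : G n₁ n₂, ∀ w : ℂ, 0 < w.im →
      DifferentiableAt ℂ (fun v : ℂ => h v.im (g + v.re • e)) w)
    (hL1 : ∀ τ : ℝ, 0 < τ → ∫⁻ g, ‖h τ g‖₊ ≤ ENNReal.ofReal M)
    {ψ Dψ : G n₁ n₂ → ℂ} (hψc : Continuous ψ) (hDψc : Continuous Dψ)
    (hψb : ∀ g, ‖ψ g‖ ≤ Cψ) (hDψb : ∀ g, ‖Dψ g‖ ≤ CD)
    (hder : ∀ (g : G n₁ n₂) (σ : ℝ),
      HasDerivAt (fun σ' : ℝ => ψ (g + σ' • e)) (Dψ (g + σ • e)) σ)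
    {a b : ℝ} (ha : 0 < a) (hb : 0 < b) :
    ‖(∫ g, h b g * ψ g) - ∫ g, h a g * ψ g‖ ≤ M * CD * |b - a| := by
  set q : ℂ → ℂ := fun w : ℂ => ∫ g, h w.im (g + w.re • e) * ψ g with hqdef
  have hqd : ∀ w : ℂ, 0 < w.im → DifferentiableAt ℂ q w := fun w hw =>
    diff_q hM h e hcont hhol hL1 hψc hψb hw
  have hslice_cont : ∀ τ : ℝ, 0 < τ → Continuous (fun g => h τ g) := by
    intro τ hτ
    exact hcont.comp_continuous (continuous_const.prodMk continuous_id) (fun g => hτ)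
  have hslice_int : ∀ τ : ℝ, 0 < τ → Integrable (fun g => h τ g) := fun τ hτ =>
    integrable_of_lintegral_le ((hslice_cont τ hτ).aestronglyMeasurable) (hL1 τ hτ)
  -- derivative of the translated pairing
  have hG : ∀ (τ : ℝ), 0 < τ → ∀ σ : ℝ,
      HasDerivAt (fun σ' : ℝ => ∫ g, h τ g * ψ (g - σ' • e))
        (∫ g, h τ g * (-Dψ (g - σ • e))) σ := by
    intro τ hτ σ
    have hmain := hasDerivAt_integral_of_dominated_loc_of_deriv_le
      (μ := (volume : Measure (G n₁ n₂))) (x₀ := σ) (s := Metric.ball σ 1)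
      (F := fun (σ' : ℝ) (g : G n₁ n₂) => h τ g * ψ (g - σ' • e))
      (F' := fun (σ' : ℝ) (g : G n₁ n₂) => h τ g * (-Dψ (g - σ' • e)))
      (bound := fun g => ‖h τ g‖ * CD) (Metric.ball_mem_nhds σ one_pos)
      (Filter.Eventually.of_forall fun σ' =>
        ((hslice_cont τ hτ).mul
          (hψc.comp (continuous_id.sub continuous_const))).aestronglyMeasurable)
      (integrable_mul_bdd (hslice_int τ hτ)
        ((hψc.comp (continuous_id.sub continuous_const)).aestronglyMeasurable)
        (fun g => hψb _))
      (((hslice_cont τ hτ).mul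
        ((hDψc.comp (continuous_id.sub continuous_const)).neg)).aestronglyMeasurable)
      (Filter.Eventually.of_forall fun g => ?_)
      ((hslice_int τ hτ).norm.mul_const CD)
      (Filter.Eventually.of_forall fun g => ?_)
    · exact hmain.2
    · intro σ' _
      rw [norm_mul, norm_neg]
      exact mul_le_mul_of_nonneg_left (hDψb _) (norm_nonneg _)
    · intro σ' _
      have h1 : HasDerivAt (fun σ'' : ℝ => -σ'') (-1 : ℝ) σ' := (hasDerivAt_id σ').neg
      have h2 : HasDerivAt (fun σ'' : ℝ => ψ (g + σ'' • e)) (Dψ (g + (-σ') • e)) (-σ') :=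
        hder g (-σ')
      have h3 := h2.scomp σ' h1
      have h4 : HasDerivAt (fun σ'' : ℝ => ψ (g - σ'' • e)) (-Dψ (g - σ' • e)) σ' := by
        have hfe : (fun σ'' : ℝ => ψ (g + (-σ'') • e)) = fun σ'' : ℝ => ψ (g - σ'' • e) := by
          funext σ''
          rw [neg_smul, ← sub_eq_add_neg]
        have hval : ((-1 : ℝ) • Dψ (g + (-σ') • e)) = -Dψ (g - σ' • e) := by
          rw [neg_smul, one_smul, neg_smul, ← sub_eq_add_neg]
        rw [← hfe, ← hval]
        exact h3
      exact h4.const_mul (h τ g)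
  have hGb : ∀ (τ : ℝ), 0 < τ → ∀ σ : ℝ, ‖∫ g, h τ g * (-Dψ (g - σ • e))‖ ≤ M * CD := by
    intro τ hτ σ
    refine norm_integral_mul_le hM hCD (hslice_int τ hτ) (hL1 τ hτ)
      ((hDψc.comp (continuous_id.sub continuous_const)).neg.aestronglyMeasurable) (fun g => ?_)
    rw [norm_neg]
    exact hDψb _
  have hq_eq : ∀ (σ τ : ℝ), q ((σ : ℂ) + (τ : ℂ) * Complex.I) = ∫ g, h τ g * ψ (g - σ • e) := by
    intro σ τ
    have h1 : ((σ : ℂ) + (τ : ℂ) * Complex.I).im = τ := by simp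
    have h2 : ((σ : ℂ) + (τ : ℂ) * Complex.I).re = σ := by simp
    show (∫ g, h ((σ : ℂ) + (τ : ℂ) * Complex.I).im
        (g + ((σ : ℂ) + (τ : ℂ) * Complex.I).re • e) * ψ g) = _
    rw [h1, h2]
    exact integral_translate_mul _ _ _
  have hderivq : ∀ τ : ℝ, 0 < τ → ‖deriv q ((τ : ℂ) * Complex.I)‖ ≤ M * CD := by
    intro τ hτ
    set ι : ℝ → ℂ := fun σ : ℝ => (σ : ℂ) + (τ : ℂ) * Complex.I with hιdef
    have hι : HasDerivAt ι 1 0 := by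
      have h0 : HasDerivAt (fun σ : ℝ => (σ : ℂ)) 1 0 := by
        have h0' := Complex.ofRealCLM.hasDerivAt (x := (0:ℝ)); simp at h0'; exact h0'
      exact h0.add_const _
    have him : 0 < (ι 0).im := by simp [hιdef, hτ]
    have hqdiff := hqd (ι 0) him
    have h2 := (hqdiff.hasDerivAt.hasFDerivAt.restrictScalars ℝ).comp_hasDerivAt 0 hι
    have h3 : HasDerivAt (q ∘ ι) (deriv q (ι 0)) 0 := by simpa using h2
    have hfun : q ∘ ι = fun σ : ℝ => ∫ g, h τ g * ψ (g - σ • e) := by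
      funext σ
      exact hq_eq σ τ
    rw [hfun] at h3
    have huniq : deriv q (ι 0) = ∫ g, h τ g * (-Dψ (g - (0:ℝ) • e)) :=
      h3.unique (hG τ hτ 0)
    have hι0 : ι 0 = (τ : ℂ) * Complex.I := by simp [hιdef]
    rw [← hι0, huniq]
    exact hGb τ hτ 0
  set v : ℝ → ℂ := fun τ : ℝ => q ((τ : ℂ) * Complex.I) with hvdef
  have hvder : ∀ τ ∈ Set.Ioi (0:ℝ),
      HasDerivWithinAt v (deriv q ((τ : ℂ) * Complex.I) * Complex.I) (Set.Ioi 0) τ := by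
    intro τ hτ
    have hι₂ : HasDerivAt (fun τ' : ℝ => (τ' : ℂ) * Complex.I) Complex.I τ := by
      have h0 : HasDerivAt (fun τ' : ℝ => (τ' : ℂ)) 1 τ := by
        have h0' := Complex.ofRealCLM.hasDerivAt (x := τ); simp at h0'; exact h0'
      simpa using h0.mul_const Complex.I
    have him : 0 < ((τ : ℂ) * Complex.I).im := by
      simpa using (Set.mem_Ioi.1 hτ)
    have hqdiff := hqd ((τ : ℂ) * Complex.I) him
    have h2 := (hqdiff.hasDerivAt.hasFDerivAt.restrictScalars ℝ).comp_hasDerivAt τ hι₂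
    have h3 : HasDerivAt v (deriv q ((τ : ℂ) * Complex.I) * Complex.I) τ := by
      have : HasDerivAt v (Complex.I • deriv q ((τ : ℂ) * Complex.I)) τ := by simp at h2; exact h2
      simpa [smul_eq_mul, mul_comm] using this
    exact h3.hasDerivWithinAt
  have hbound : ∀ τ ∈ Set.Ioi (0:ℝ), ‖deriv q ((τ : ℂ) * Complex.I) * Complex.I‖ ≤ M * CD := by
    intro τ hτ
    rw [norm_mul, Complex.norm_I, mul_one]
    exact hderivq τ (Set.mem_Ioi.1 hτ)
  have hlip := Convex.norm_image_sub_le_of_norm_hasDerivWithin_le hvder hbound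
    (convex_Ioi 0) (Set.mem_Ioi.2 ha) (Set.mem_Ioi.2 hb)
  have hv_eq : ∀ t : ℝ, v t = ∫ g, h t g * ψ g := by
    intro t
    have := hq_eq 0 t
    simpa using this
  rw [hv_eq, hv_eq] at hlip
  rwa [Real.norm_eq_abs] at hlip


lemma norm_e₁_le : ‖(e₁ : G n₁ n₂)‖ ≤ 1 := by
  rw [Prod.norm_def]
  refine max_le ?_ ?_
  · rw [Prod.norm_def]
    refine max_le ?_ ?_ <;> simp [e₁]
  · simp [e₁]

lemma norm_e₂_le : ‖(e₂ : G n₁ n₂)‖ ≤ 1 := by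
  rw [Prod.norm_def]
  refine max_le ?_ ?_
  · simp [e₂]
  · rw [Prod.norm_def]
    refine max_le ?_ ?_ <;> simp [e₂]

lemma schwartz_deriv_bound (ψ : SchwartzMap (G n₁ n₂) ℂ) {e : G n₁ n₂} (he : ‖e‖ ≤ 1) (g : G n₁ n₂) :
    ‖fderiv ℝ (⇑ψ) g e‖ ≤ (SchwartzMap.seminorm ℂ 0 1) ψ := by
  have h1 : fderiv ℝ (⇑ψ) g e = iteratedFDeriv ℝ 1 (⇑ψ) g (fun _ => e) := by
    rw [iteratedFDeriv_one_apply]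
  rw [h1]
  have h2 := (iteratedFDeriv ℝ 1 (⇑ψ) g).le_opNorm (fun _ => e)
  have h3 : (∏ i : Fin 1, ‖(fun _ => e) i‖) = ‖e‖ := by simp
  rw [h3] at h2
  calc ‖iteratedFDeriv ℝ 1 (⇑ψ) g (fun _ => e)‖ ≤ ‖iteratedFDeriv ℝ 1 (⇑ψ) g‖ * ‖e‖ := h2
    _ ≤ (SchwartzMap.seminorm ℂ 0 1) ψ * 1 := by
        refine mul_le_mul (SchwartzMap.norm_iteratedFDeriv_le_seminorm ℂ ψ 1 g) he
          (norm_nonneg _) (apply_nonneg _ _)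
    _ = (SchwartzMap.seminorm ℂ 0 1) ψ := mul_one _

lemma schwartz_hasDerivAt (ψ : SchwartzMap (G n₁ n₂) ℂ) (e : G n₁ n₂) (g : G n₁ n₂) (σ : ℝ) :
    HasDerivAt (fun σ' : ℝ => ψ (g + σ' • e)) (fderiv ℝ (⇑ψ) (g + σ • e) e) σ := by
  have hin : HasDerivAt (fun σ' : ℝ => g + σ' • e) e σ := by
    simpa using ((hasDerivAt_id σ).smul_const e).const_add g
  exact (ψ.differentiableAt.hasFDerivAt).comp_hasDerivAt σ hin

lemma schwartz_fderiv_cont (ψ : SchwartzMap (G n₁ n₂) ℂ) (e : G n₁ n₂) :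
    Continuous (fun g => fderiv ℝ (⇑ψ) g e) :=
  ((ψ.smooth ⊤).continuous_fderiv (by simp)).clm_apply continuous_const

end BoundaryDist

open BoundaryDist

/-- A holomorphic `H¹` function on `𝒰 = ℝ₊² × ℋ_{n₁} × ℋ_{n₂}` has a boundary
tempered distribution `f^b` on `ℋ_{n₁} × ℋ_{n₂}`: for every Schwartz test
function `ψ`, `∫ f(ε₁,ε₂,g) ψ(g) dg → f^b(ψ)` as `(ε₁,ε₂) → (0,0)` from the
open quadrant. -/
theorem exists_boundary_distribution (n₁ n₂ : ℕ) (hn₁ : 0 < n₁) (hn₂ : 0 < n₂)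
    (f : FlatPt n₁ n₂ → ℂ)
    (hf : ContDiffOn ℝ (⊤ : ℕ∞) f {q : FlatPt n₁ n₂ | 0 < q.1 ∧ 0 < q.2.1})
    (hholo : ∀ q : FlatPt n₁ n₂, 0 < q.1 → 0 < q.2.1 → IsFlatHolomorphicAt n₁ n₂ f q)
    (hH1 : ∃ M : ℝ, ∀ t₁ t₂ : ℝ, 0 < t₁ → 0 < t₂ →
      ∫⁻ g : Heis n₁ × Heis n₂, ENNReal.ofReal ‖f (t₁, t₂, g.1, g.2)‖
        ≤ ENNReal.ofReal M) :
    ∃ fb : SchwartzMap (Heis n₁ × Heis n₂) ℂ →L[ℂ] ℂ,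
      ∀ ψ : SchwartzMap (Heis n₁ × Heis n₂) ℂ,
        Filter.Tendsto
          (fun ε : ℝ × ℝ => ∫ g : Heis n₁ × Heis n₂, f (ε.1, ε.2, g.1, g.2) * ψ g)
          (nhdsWithin (0, 0) (Set.Ioi 0 ×ˢ Set.Ioi 0))
          (nhds (fb ψ)) := by
  classical
  obtain ⟨M₀, hH⟩ := hH1
  set M : ℝ := max M₀ 0 with hMdef
  have hM : 0 ≤ M := le_max_right _ _
  have hL1' : ∀ t₁ t₂ : ℝ, 0 < t₁ → 0 < t₂ →
      ∫⁻ g : G n₁ n₂, (‖f (t₁, t₂, g)‖₊ : ENNReal) ≤ ENNReal.ofReal M := by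
    intro t₁ t₂ h1 h2
    have hcng : ∫⁻ g : G n₁ n₂, (‖f (t₁, t₂, g)‖₊ : ENNReal)
        = ∫⁻ g : G n₁ n₂, ENNReal.ofReal ‖f (t₁, t₂, g.1, g.2)‖ := by
      refine lintegral_congr fun g => ?_
      exact (ofReal_norm _).symm
    rw [hcng]
    exact (hH t₁ t₂ h1 h2).trans (ENNReal.ofReal_le_ofReal (le_max_left _ _))
  have hfc : ContinuousOn f {q : FlatPt n₁ n₂ | 0 < q.1 ∧ 0 < q.2.1} := hf.continuousOn
  -- continuity of slices
  have hc1 : ∀ t₂ : ℝ, 0 < t₂ →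
      ContinuousOn (fun p : ℝ × G n₁ n₂ => f (p.1, t₂, p.2)) {p : ℝ × G n₁ n₂ | 0 < p.1} := by
    intro t₂ ht₂
    have hm : Continuous (fun p : ℝ × G n₁ n₂ => ((p.1, t₂, p.2) : FlatPt n₁ n₂)) :=
      continuous_fst.prodMk (continuous_const.prodMk continuous_snd)
    exact hfc.comp hm.continuousOn (fun p hp => ⟨hp, ht₂⟩)
  have hc2 : ∀ t₁ : ℝ, 0 < t₁ →
      ContinuousOn (fun p : ℝ × G n₁ n₂ => f (t₁, p.1, p.2)) {p : ℝ × G n₁ n₂ | 0 < p.1} := by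
    intro t₁ ht₁
    have hm : Continuous (fun p : ℝ × G n₁ n₂ => ((t₁, p.1, p.2) : FlatPt n₁ n₂)) :=
      continuous_const.prodMk (continuous_fst.prodMk continuous_snd)
    exact hfc.comp hm.continuousOn (fun p hp => ⟨ht₁, hp⟩)
  set Q2 : Set (ℝ × ℝ) := Set.Ioi (0:ℝ) ×ˢ Set.Ioi (0:ℝ) with hQ2def
  set l : Filter (ℝ × ℝ) := nhdsWithin ((0:ℝ), (0:ℝ)) Q2 with hldef
  have hlne : l.NeBot := by
    rw [hldef]
    refine mem_closure_iff_nhdsWithin_neBot.1 ?_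
    rw [hQ2def, closure_prod_eq, closure_Ioi]
    exact ⟨Set.mem_Ici.2 le_rfl, Set.mem_Ici.2 le_rfl⟩
  set Φ : SchwartzMap (G n₁ n₂) ℂ → ℝ × ℝ → ℂ :=
    fun ψ ε => ∫ g : G n₁ n₂, f (ε.1, ε.2, g.1, g.2) * ψ g with hΦdef
  -- integrability of slices paired with ψ, and the sup bound
  have hslice_cont : ∀ t₁ t₂ : ℝ, 0 < t₁ → 0 < t₂ →
      Continuous (fun g : G n₁ n₂ => f (t₁, t₂, g)) := by
    intro t₁ t₂ h1 h2
    exact (hc2 t₁ h1).comp_continuous (continuous_const.prodMk continuous_id) (fun g => h2)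
  have hslice_int : ∀ t₁ t₂ : ℝ, 0 < t₁ → 0 < t₂ →
      Integrable (fun g : G n₁ n₂ => f (t₁, t₂, g)) := by
    intro t₁ t₂ h1 h2
    exact integrable_of_lintegral_le (hslice_cont t₁ t₂ h1 h2).aestronglyMeasurable
      (hL1' t₁ t₂ h1 h2)
  have hΦbound : ∀ ψ : SchwartzMap (G n₁ n₂) ℂ, ∀ ε : ℝ × ℝ, ε ∈ Q2 →
      ‖Φ ψ ε‖ ≤ M * (SchwartzMap.seminorm ℂ 0 0) ψ := by
    intro ψ ε hε
    exact norm_integral_mul_le hM (apply_nonneg _ _) (hslice_int ε.1 ε.2 hε.1 hε.2)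
      (hL1' ε.1 ε.2 hε.1 hε.2) ψ.continuous.aestronglyMeasurable
      (fun g => SchwartzMap.norm_le_seminorm ℂ ψ g)
  -- the two-leg Lipschitz estimate
  have key : ∀ ψ : SchwartzMap (G n₁ n₂) ℂ, ∀ a b : ℝ × ℝ, a ∈ Q2 → b ∈ Q2 →
      ‖Φ ψ b - Φ ψ a‖ ≤ M * (SchwartzMap.seminorm ℂ 0 1) ψ * (|b.1 - a.1| + |b.2 - a.2|) := by
    intro ψ a b ha hb
    set CD : ℝ := (SchwartzMap.seminorm ℂ 0 1) ψ with hCDdef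
    have hCD : 0 ≤ CD := apply_nonneg _ _
    have leg2 : ‖Φ ψ b - Φ ψ (b.1, a.2)‖ ≤ M * CD * |b.2 - a.2| := by
      have := core_lipschitz (Cψ := (SchwartzMap.seminorm ℂ 0 0) ψ) hM hCD
        (fun τ g => f (b.1, τ, g)) e₂ (hc2 b.1 hb.1)
        (fun g w hw => slice_holo₂ hf hholo hb.1 g hw)
        (fun τ hτ => hL1' b.1 τ hb.1 hτ)
        ψ.continuous (schwartz_fderiv_cont ψ e₂)
        (fun g => SchwartzMap.norm_le_seminorm ℂ ψ g)
        (fun g => schwartz_deriv_bound ψ norm_e₂_le g)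
        (fun g σ => schwartz_hasDerivAt ψ e₂ g σ) ha.2 hb.2
      exact this
    have leg1 : ‖Φ ψ (b.1, a.2) - Φ ψ a‖ ≤ M * CD * |b.1 - a.1| := by
      have := core_lipschitz (Cψ := (SchwartzMap.seminorm ℂ 0 0) ψ) hM hCD
        (fun τ g => f (τ, a.2, g)) e₁ (hc1 a.2 ha.2)
        (fun g w hw => slice_holo₁ hf hholo ha.2 g hw)
        (fun τ hτ => hL1' τ a.2 hτ ha.2)
        ψ.continuous (schwartz_fderiv_cont ψ e₁)
        (fun g => SchwartzMap.norm_le_seminorm ℂ ψ g)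
        (fun g => schwartz_deriv_bound ψ norm_e₁_le g)
        (fun g σ => schwartz_hasDerivAt ψ e₁ g σ) ha.1 hb.1
      exact this
    calc ‖Φ ψ b - Φ ψ a‖ = ‖(Φ ψ b - Φ ψ (b.1, a.2)) + (Φ ψ (b.1, a.2) - Φ ψ a)‖ := by
          congr 1
          ring
      _ ≤ ‖Φ ψ b - Φ ψ (b.1, a.2)‖ + ‖Φ ψ (b.1, a.2) - Φ ψ a‖ := norm_add_le _ _
      _ ≤ M * CD * |b.2 - a.2| + M * CD * |b.1 - a.1| := add_le_add leg2 leg1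
      _ = M * CD * (|b.1 - a.1| + |b.2 - a.2|) := by ring
  -- existence of the boundary limit
  have hex : ∀ ψ : SchwartzMap (G n₁ n₂) ℂ, ∃ L : ℂ, Filter.Tendsto (Φ ψ) l (nhds L) := by
    intro ψ
    set K : ℝ := M * (SchwartzMap.seminorm ℂ 0 1) ψ with hKdef
    have hK : 0 ≤ K := mul_nonneg hM (apply_nonneg _ _)
    have hcauchy : Cauchy (Filter.map (Φ ψ) l) := by
      refine Metric.cauchy_iff.2 ⟨Filter.map_neBot, fun ε hε => ?_⟩
      set δ : ℝ := ε / (8 * (K + 1)) with hδdef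
      have hδpos : 0 < δ := by positivity
      refine ⟨Φ ψ '' (Q2 ∩ Metric.ball ((0:ℝ), (0:ℝ)) δ), Filter.image_mem_map ?_, ?_⟩
      · exact Filter.inter_mem self_mem_nhdsWithin
          (mem_nhdsWithin_of_mem_nhds (Metric.ball_mem_nhds _ hδpos))
      · rintro x ⟨p, ⟨hpQ, hpB⟩, rfl⟩ y ⟨r, ⟨hrQ, hrB⟩, rfl⟩
        have h1 := key ψ r p hrQ hpQ
        have hcomp : ∀ z : ℝ × ℝ, z ∈ Metric.ball ((0:ℝ), (0:ℝ)) δ → |z.1| < δ ∧ |z.2| < δ := by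
          intro z hz
          rw [Metric.mem_ball, Prod.dist_eq] at hz
          have hza : dist z.1 ((0:ℝ),(0:ℝ)).1 < δ := lt_of_le_of_lt (le_max_left _ _) hz
          have hzb : dist z.2 ((0:ℝ),(0:ℝ)).2 < δ := lt_of_le_of_lt (le_max_right _ _) hz
          constructor
          · simpa [Real.dist_eq] using hza
          · simpa [Real.dist_eq] using hzb
        obtain ⟨hp1, hp2⟩ := hcomp p hpB
        obtain ⟨hr1, hr2⟩ := hcomp r hrB
        have hs1 : |p.1 - r.1| ≤ |p.1| + |r.1| := abs_sub _ _
        have hs2 : |p.2 - r.2| ≤ |p.2| + |r.2| := abs_sub _ _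
        rw [dist_eq_norm]
        calc ‖Φ ψ p - Φ ψ r‖ ≤ K * (|p.1 - r.1| + |p.2 - r.2|) := h1
          _ ≤ K * (4 * δ) := by
              refine mul_le_mul_of_nonneg_left ?_ hK
              linarith
          _ < (K + 1) * (4 * δ) := by
              have : (0:ℝ) < 4 * δ := by linarith
              nlinarith
          _ = ε / 2 := by
              have hK1 : K + 1 ≠ 0 := by positivity
              rw [hδdef]
              field_simp
              ring
          _ ≤ ε := by linarith
    obtain ⟨L, hL⟩ := CompleteSpace.complete hcauchy
    exact ⟨L, hL⟩
  choose bLim hbLim using hex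
  have hadd : ∀ ψ φ : SchwartzMap (G n₁ n₂) ℂ, bLim (ψ + φ) = bLim ψ + bLim φ := by
    intro ψ φ
    refine tendsto_nhds_unique (hbLim (ψ + φ)) ?_
    have h2 : Filter.Tendsto (fun ε => Φ ψ ε + Φ φ ε) l (nhds (bLim ψ + bLim φ)) :=
      (hbLim ψ).add (hbLim φ)
    refine h2.congr' ?_
    filter_upwards [self_mem_nhdsWithin] with ε hε
    show Φ ψ ε + Φ φ ε = Φ (ψ + φ) ε
    rw [hΦdef]
    simp only []
    rw [← integral_add (integrable_mul_bdd (hslice_int ε.1 ε.2 hε.1 hε.2)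
        ψ.continuous.aestronglyMeasurable (fun g => SchwartzMap.norm_le_seminorm ℂ ψ g))
      (integrable_mul_bdd (hslice_int ε.1 ε.2 hε.1 hε.2)
        φ.continuous.aestronglyMeasurable (fun g => SchwartzMap.norm_le_seminorm ℂ φ g))]
    refine integral_congr_ae (Filter.Eventually.of_forall fun g => ?_)
    simp [mul_add]
  have hsmul : ∀ (c : ℂ) (ψ : SchwartzMap (G n₁ n₂) ℂ), bLim (c • ψ) = c • bLim ψ := by
    intro c ψ
    refine tendsto_nhds_unique (hbLim (c • ψ)) ?_
    have h2 : Filter.Tendsto (fun ε => c • Φ ψ ε) l (nhds (c • bLim ψ)) :=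
      (hbLim ψ).const_smul c
    refine h2.congr' ?_
    filter_upwards [self_mem_nhdsWithin] with ε hε
    show c • Φ ψ ε = Φ (c • ψ) ε
    rw [hΦdef]
    simp only []
    rw [← integral_smul]
    refine integral_congr_ae (Filter.Eventually.of_forall fun g => ?_)
    simp [smul_eq_mul]
    ring
  have hnorm : ∀ ψ : SchwartzMap (G n₁ n₂) ℂ, ‖bLim ψ‖ ≤ M * (SchwartzMap.seminorm ℂ 0 0) ψ := by
    intro ψ
    refine le_of_tendsto (hbLim ψ).norm ?_
    filter_upwards [self_mem_nhdsWithin] with ε hε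
    exact hΦbound ψ ε hε
  refine ⟨SchwartzMap.mkCLMtoNormedSpace bLim hadd hsmul ⟨{(0,0)}, M, hM, ?_⟩, ?_⟩
  · intro ψ
    have : (({(0,0)} : Finset (ℕ × ℕ)).sup (schwartzSeminormFamily ℂ (G n₁ n₂) ℂ)) ψ
        = (SchwartzMap.seminorm ℂ 0 0) ψ := by
      rw [Finset.sup_singleton]
      rfl
    rw [this]
    exact hnorm ψ
  · intro ψ
    exact hbLim ψ
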